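/- arXiv:1404.3586 — 3 statements merged into one kernel-verified Lean document; each statement's English description precedes it below -/
import Mathlib

section
/- Every orthogonal array OA(r, N, d, k) of index unity (λ = 1, so r = d^k) with k ≤ N − k is irredundant: for every choice of k columns to delete, the r rows restricted to the remaining N − k columns are pairwise distinct. -/
/-- Every orthogonal array OA(r,N,d,k) of index unity (each `k`-tuple appears exactly
once in every choice of `k` columns) with `2k ≤ N` is irredundant: for every choice of
`k` columns to delete, the rows restricted to the remaining `N - k` columns are
pairwise distinct. -/
theorem oa_index_unity_irredundant {r N d k : ℕ} (hk : 1 ≤ k) (hd : 2 ≤ d)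
    (hkN : 2 * k ≤ N) (A : Fin r → Fin N → Fin d)
    (hOA : ∀ c : Fin k → Fin N, Function.Injective c → ∀ t : Fin k → Fin d,
      (Finset.univ.filter fun i : Fin r => ∀ j, A i (c j) = t j).card = 1) :
    ∀ c : Fin k → Fin N, Function.Injective c →
      ∀ i₁ i₂ : Fin r, (∀ j : Fin N, (∀ l, c l ≠ j) → A i₁ j = A i₂ j) → i₁ = i₂ := by
  intro c hc i₁ i₂ hagree
  -- complement of the image of c
  set T : Finset (Fin N) := Finset.univ \ Finset.image c Finset.univ with hT
  have hTcard : T.card = N - k := by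
    rw [hT, Finset.card_sdiff_of_subset (Finset.subset_univ _), Finset.card_univ,
      Finset.card_image_of_injective _ hc]
    simp
  have hkT : k ≤ T.card := by
    rw [hTcard]; omega
  obtain ⟨S, hST, hScard⟩ := Finset.exists_subset_card_eq hkT
  set c' : Fin k → Fin N := fun j => S.orderIsoOfFin hScard j with hc'
  have hc'inj : Function.Injective c' := by
    intro a b hab
    have := (S.orderIsoOfFin hScard).injective (Subtype.ext hab)
    exact this
  have hmem : ∀ j, c' j ∈ T := fun j => hST (S.orderIsoOfFin hScard j).2
  have hnot : ∀ j l, c l ≠ c' j := by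
    intro j l h
    have := hmem j
    rw [hT, Finset.mem_sdiff] at this
    exact this.2 (Finset.mem_image.mpr ⟨l, Finset.mem_univ _, h⟩)
  have hcard := hOA c' hc'inj (fun j => A i₁ (c' j))
  rw [Finset.card_eq_one] at hcard
  obtain ⟨a, ha⟩ := hcard
  have h1 : i₁ ∈ Finset.univ.filter fun i : Fin r => ∀ j, A i (c' j) = A i₁ (c' j) := by
    simp
  have h2 : i₂ ∈ Finset.univ.filter fun i : Fin r => ∀ j, A i (c' j) = A i₁ (c' j) := by
    simp only [Finset.mem_filter, Finset.mem_univ, true_and]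
    intro j
    exact (hagree (c' j) (fun l => hnot j l)).symm
  rw [ha, Finset.mem_singleton] at h1 h2
  rw [h1, h2]
end

section
/- Let A be an irredundant orthogonal array OA(r, N, d, k) and let |Φ⟩ = (1/√r) Σ_{i=1}^{r} |s^i_1, ..., s^i_N⟩ be the associated pure state of N qudits with d levels, where the rows of A are the s^i. Then |Φ⟩ is k-uniform: for every subset T of k of the N subsystems, the reduced density matrix of |Φ⟩⟨Φ| on T equals the maximally mixed state I/d^k. -/
/-! Irredundancy says that two rows agreeing outside the `k` chosen columns are equal, so a pair
of rows contributing to the `(t, t')` entry of the reduced state is a single row `i`, read as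
`t` and as `t'` on the chosen columns. Hence off-diagonal entries vanish and each diagonal entry
counts the rows reading `t` there, which by the orthogonal-array property is the index `λ`.
Counting all rows by their restriction gives `r = dᵏ λ`, so every diagonal entry is `1 / dᵏ`. -/

open Finset

theorem Fintype.card_eq_card_mul_of_card_fiber_eq {α β : Type*} [Fintype α] [Fintype β]
    [DecidableEq β] (f : α → β) {n : ℕ} (h : ∀ b, #{a | f a = b} = n) :
    Fintype.card α = Fintype.card β * n := by
  rw [← card_univ, card_eq_sum_card_fiberwise (t := univ) (fun a _ => mem_univ (f a))]
  simp only [h, sum_const, card_univ, smul_eq_mul]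

theorem Finset.card_filter_prod_eq_card_filter_of_rel {α : Type*} [Fintype α] [DecidableEq α]
    {R : α → α → Prop} [DecidableRel R] (hR : ∀ a b, R a b → a = b) (hrefl : ∀ a, R a a)
    (P Q : α → Prop) [DecidablePred P] [DecidablePred Q] :
    #{p : α × α | R p.1 p.2 ∧ P p.1 ∧ Q p.2} = #{a | P a ∧ Q a} := by
  refine card_nbij' Prod.fst (fun a => (a, a)) ?_ ?_ ?_ ?_
  · rintro ⟨a, b⟩ hab
    simp only [coe_filter, mem_univ, true_and, Set.mem_ofPred_eq] at hab ⊢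
    obtain ⟨hrel, hP, hQ⟩ := hab
    exact ⟨hP, hR a b hrel ▸ hQ⟩
  · intro a ha
    simp only [coe_filter, mem_univ, true_and, Set.mem_ofPred_eq] at ha ⊢
    exact ⟨hrefl a, ha⟩
  · rintro ⟨a, b⟩ hab
    simp only [coe_filter, mem_univ, true_and, Set.mem_ofPred_eq] at hab
    simp [hR a b hab.1]
  · intro a _
    rfl

theorem oa_irredundant_k_uniform_general {r N d k : ℕ} (hr : 0 < r) (A : Fin r → Fin N → Fin d)
    (hOA : ∃ lam : ℕ, ∀ c : Fin k → Fin N, Function.Injective c → ∀ t : Fin k → Fin d,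
      (Finset.univ.filter fun i : Fin r => ∀ j, A i (c j) = t j).card = lam)
    (hirr : ∀ c : Fin k → Fin N, Function.Injective c →
      ∀ i₁ i₂ : Fin r, (∀ j : Fin N, (∀ l, c l ≠ j) → A i₁ j = A i₂ j) → i₁ = i₂) :
    ∀ c : Fin k → Fin N, Function.Injective c → ∀ t t' : Fin k → Fin d,
      ((r : ℂ))⁻¹ *
        (((Finset.univ : Finset (Fin r × Fin r)).filter fun p =>
          (∀ j : Fin N, (∀ l, c l ≠ j) → A p.1 j = A p.2 j) ∧
          (∀ l, A p.1 (c l) = t l) ∧ (∀ l, A p.2 (c l) = t' l)).card : ℂ)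
      = if t = t' then ((d : ℂ) ^ k)⁻¹ else 0 := by
  obtain ⟨lam, hlam⟩ := hOA
  intro c hc t t'
  have hfiber (s : Fin k → Fin d) : #{i | (fun l => A i (c l)) = s} = lam := by
    simpa only [funext_iff] using hlam c hc s
  have hr_eq : r = d ^ k * lam := by
    simpa using Fintype.card_eq_card_mul_of_card_fiber_eq _ hfiber
  rw [card_filter_prod_eq_card_filter_of_rel (hirr c hc) (fun _ _ _ => rfl)
    (fun i => ∀ l, A i (c l) = t l) (fun i => ∀ l, A i (c l) = t' l)]
  split_ifs with htt
  · subst htt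
    have hlam_ne : lam ≠ 0 := by rintro rfl; simp [hr_eq] at hr
    have hd_ne : d ^ k ≠ 0 := by rintro h; simp [hr_eq, h] at hr
    simp only [and_self, hlam c hc t, hr_eq, Nat.cast_mul, Nat.cast_pow]
    field_simp
  · have hempty : #{i | (∀ l, A i (c l) = t l) ∧ ∀ l, A i (c l) = t' l} = 0 :=
      card_eq_zero.mpr <| filter_false_of_mem fun i _ ⟨h, h'⟩ =>
        htt (funext fun l => (h l).symm.trans (h' l))
    simp [hempty]

/-- Let `A` be an irredundant orthogonal array OA(r,N,d,k) with pairwise distinct rows,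
and let `|Φ⟩ = (1/√r) Σᵢ |sⁱ₁,…,sⁱ_N⟩` be the associated pure state of `N` qudits with
`d` levels. Then `|Φ⟩` is `k`-uniform: for every subset of `k` subsystems (given by an
injective `c : Fin k → Fin N`), the reduced density matrix of `|Φ⟩⟨Φ|` —
whose `(t,t')` matrix element in the computational basis equals
`(1/r) · #{(i,i') : rows i and i' agree outside the chosen columns, row i restricted to
the chosen columns is t and row i' is t'}` — equals the maximally mixed state `I/dᵏ`. -/
theorem oa_irredundant_k_uniform {r N d k : ℕ} (hr : 0 < r) (hk : 1 ≤ k) (hd : 2 ≤ d)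
    (hkN : 2 * k ≤ N) (A : Fin r → Fin N → Fin d) (hrows : Function.Injective A)
    (hOA : ∃ lam : ℕ, ∀ c : Fin k → Fin N, Function.Injective c → ∀ t : Fin k → Fin d,
      (Finset.univ.filter fun i : Fin r => ∀ j, A i (c j) = t j).card = lam)
    (hirr : ∀ c : Fin k → Fin N, Function.Injective c →
      ∀ i₁ i₂ : Fin r, (∀ j : Fin N, (∀ l, c l ≠ j) → A i₁ j = A i₂ j) → i₁ = i₂) :
    ∀ c : Fin k → Fin N, Function.Injective c → ∀ t t' : Fin k → Fin d,
      ((r : ℂ))⁻¹ *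
        (((Finset.univ : Finset (Fin r × Fin r)).filter fun p =>
          (∀ j : Fin N, (∀ l, c l ≠ j) → A p.1 j = A p.2 j) ∧
          (∀ l, A p.1 (c l) = t l) ∧ (∀ l, A p.2 (c l) = t' l)).card : ℂ)
      = if t = t' then ((d : ℂ) ^ k)⁻¹ else 0 :=
  oa_irredundant_k_uniform_general hr A hOA hirr
end

section
/- The Rao bound for strength 2: every orthogonal array OA(r, N, d, 2) satisfies r ≥ 1 + N(d−1). -/
/-!
A contrast `a : σ → ℚ` (a function with zero sum) read off column `j` gives the row vector
`i ↦ a (A i j)`. Pair balance makes the inner product of the vectors of `a` and `b` in distinct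
columns equal to `λ (∑ a) (∑ b) = 0`, and in the same column equal to `λ d ⟪a, b⟫`; all of them are
orthogonal to the constant vector. Hence `(c, (a_j)_j) ↦ c + ∑ j, a_j (A · j)` embeds a space of
dimension `1 + N (d - 1)` into `ℚ^r`.
-/

open Finset Module

theorem Fintype.sum_comp_eq_sum_card_mul {ι κ R : Type*} [Fintype ι] [Fintype κ] [DecidableEq κ]
    [CommSemiring R] (g : ι → κ) (f : κ → R) :
    ∑ i, f (g i) = ∑ k, (#{i | g i = k} : R) * f k := by
  rw [← Finset.sum_fiberwise' univ g f]
  simp [sum_const, nsmul_eq_mul]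

section Contrasts

variable {K σ ι κ : Type*} [CommSemiring K] [Fintype σ]

variable (K σ) in
def contrasts : Submodule K (σ → K) :=
  LinearMap.ker (∑ s : σ, LinearMap.proj s)

theorem mem_contrasts {a : σ → K} : a ∈ contrasts K σ ↔ ∑ s, a s = 0 := by
  simp [contrasts]

variable [Fintype κ]

def contrastMap (A : ι → κ → σ) : K × (κ → contrasts K σ) →ₗ[K] ι → K where
  toFun x i := x.1 + ∑ j, (x.2 j : σ → K) (A i j)
  map_add' x y := by
    ext i
    simp [sum_add_distrib, add_add_add_comm]
  map_smul' c x := by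
    ext i
    simp [mul_sum, mul_add]

@[simp]
theorem contrastMap_apply (A : ι → κ → σ) (x : K × (κ → contrasts K σ)) (i : ι) :
    contrastMap A x i = x.1 + ∑ j, (x.2 j : σ → K) (A i j) := rfl

end Contrasts

theorem finrank_contrasts {K σ : Type*} [Field K] [Fintype σ] [Nonempty σ] :
    finrank K (contrasts K σ) = Fintype.card σ - 1 := by
  classical
  have hsum : (∑ s : σ, LinearMap.proj s : Dual K (σ → K)) ≠ 0 := fun h0 => by
    simpa using LinearMap.congr_fun h0 (Pi.single (Classical.arbitrary σ) 1)
  have := Dual.finrank_ker_add_one_of_ne_zero hsum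
  rw [finrank_pi] at this
  rw [contrasts]
  omega

def IsOrthogonalArray {ι κ σ : Type*} [Fintype ι] [DecidableEq σ] (A : ι → κ → σ) (lam : ℕ) :
    Prop :=
  ∀ j k, j ≠ k → ∀ s t, #{i | A i j = s ∧ A i k = t} = lam

namespace IsOrthogonalArray

variable {ι κ σ R : Type*} [Fintype ι] [Fintype σ] [DecidableEq σ] {A : ι → κ → σ} {lam : ℕ}

theorem sum_mul_of_ne [CommSemiring R] (h : IsOrthogonalArray A lam) {j k : κ} (hjk : j ≠ k)
    (a b : σ → R) : ∑ i, a (A i j) * b (A i k) = lam * (∑ s, a s) * ∑ t, b t := by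
  rw [Fintype.sum_comp_eq_sum_card_mul (fun i => (A i j, A i k)) (fun p => a p.1 * b p.2)]
  simp only [Prod.ext_iff, Fintype.sum_prod_type, h j k hjk]
  rw [mul_assoc, sum_mul_sum]
  simp only [mul_sum]

variable [Nontrivial κ]

theorem sum_apply [CommSemiring R] (h : IsOrthogonalArray A lam) (j : κ) (f : σ → R) :
    ∑ i, f (A i j) = lam * Fintype.card σ * ∑ s, f s := by
  obtain ⟨k, hk⟩ := exists_ne j
  simpa [mul_right_comm] using h.sum_mul_of_ne hk.symm f 1

theorem card_eq (h : IsOrthogonalArray A lam) : Fintype.card ι = lam * Fintype.card σ ^ 2 := by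
  simpa [sq, mul_assoc] using h.sum_apply (Classical.arbitrary κ) (fun _ => (1 : ℕ))

variable [Fintype κ]

theorem sum_mul_contrastMap [CommSemiring R] (h : IsOrthogonalArray A lam)
    (x : R × (κ → contrasts R σ)) (k : κ) :
    ∑ i, (x.2 k : σ → R) (A i k) * contrastMap A x i =
      lam * Fintype.card σ * ((x.2 k : σ → R) ⬝ᵥ (x.2 k : σ → R)) := by
  have hsum (j : κ) : ∑ s, (x.2 j : σ → R) s = 0 := mem_contrasts.mp (x.2 j).2
  simp only [contrastMap_apply, mul_add, sum_add_distrib, mul_sum]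
  rw [sum_comm, ← sum_mul, h.sum_apply, hsum, Fintype.sum_eq_single k]
  · simp [h.sum_apply k (fun s => (x.2 k : σ → R) s * (x.2 k : σ → R) s), dotProduct]
  · intro j hj
    rw [h.sum_mul_of_ne (Ne.symm hj), hsum, mul_zero, zero_mul]

theorem contrastMap_injective [Nonempty σ] [CommRing R] [LinearOrder R] [IsStrictOrderedRing R]
    (h : IsOrthogonalArray A lam) (hlam : lam ≠ 0) :
    Function.Injective (contrastMap (K := R) A) := by
  rw [← LinearMap.ker_eq_bot, LinearMap.ker_eq_bot']
  intro x hx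
  have hcontrast (k : κ) : x.2 k = 0 := by
    have := h.sum_mul_contrastMap x k
    simp only [hx, Pi.zero_apply, mul_zero, sum_const_zero, zero_eq_mul] at this
    simpa [hlam, dotProduct_self_eq_zero] using this
  obtain ⟨i⟩ : Nonempty ι := Fintype.card_pos_iff.mp (by rw [h.card_eq]; positivity)
  have := congrFun hx i
  simp only [contrastMap_apply, hcontrast] at this
  exact Prod.ext (by simpa using this) (funext hcontrast)

theorem rao_bound [Nonempty σ] (h : IsOrthogonalArray A lam) (hlam : lam ≠ 0) :
    1 + Fintype.card κ * (Fintype.card σ - 1) ≤ Fintype.card ι := by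
  have := LinearMap.finrank_le_finrank_of_injective (h.contrastMap_injective (R := ℚ) hlam)
  simpa [finrank_prod, finrank_pi_fintype, finrank_contrasts, finrank_pi] using this

end IsOrthogonalArray

/-- Rao bound for strength 2: every orthogonal array OA(r,N,d,2) with index `lam ≥ 1`
satisfies `r ≥ 1 + N(d-1)`. -/
theorem rao_bound_strength_two {r N d lam : ℕ} (hd : 2 ≤ d) (hN : 2 ≤ N) (hlam : 1 ≤ lam)
    (A : Fin r → Fin N → Fin d)
    (hOA : ∀ c : Fin 2 → Fin N, Function.Injective c → ∀ t : Fin 2 → Fin d,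
      (Finset.univ.filter fun i : Fin r => ∀ j, A i (c j) = t j).card = lam) :
    1 + N * (d - 1) ≤ r := by
  have hA : IsOrthogonalArray A lam := fun j k hjk s t => by
    have hinj : Function.Injective ![j, k] := by
      simp [Function.Injective, Fin.forall_fin_two, hjk, hjk.symm]
    simpa [Fin.forall_fin_two] using hOA ![j, k] hinj ![s, t]
  have : Nontrivial (Fin N) := Fin.nontrivial_iff_two_le.mpr hN
  have : NeZero d := ⟨by omega⟩
  simpa using hA.rao_bound (by omega)
end
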